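/- arXiv:1910.01780 — 2 statements merged into one kernel-verified Lean document; each statement's English description precedes it below -/
import Mathlib

section
/- Let μ be a locally finite Borel measure on ℝⁿ and let R ⊆ ℝⁿ be an ℋᵏ-measurable set with ℋᵏ(R) < ∞ such that μ = ℋᵏ restricted to R weighted by a nonnegative function θ (i.e., μ(B) = ∫_B θ dℋᵏ for every Borel set B, with θ supported in R). If the density Θᵏ(ℋᵏ⌊R, x) := lim_{r→0⁺} ℋᵏ(B_r(x) ∩ R)/(Ω(k)·rᵏ) equals 1 for ℋᵏ-a.e. x ∈ R, then for ℋᵏ-a.e. x ∈ R, θ(x) = lim_{r→0⁺} μ(B_r(x))/(Ω(k)·rᵏ). -/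
open MeasureTheory Metric Filter Topology Set

/-- `Ω(k)`: the volume of the unit ball in `ℝᵏ`. -/
noncomputable def unitBallVol (k : ℕ) : ENNReal :=
  volume (Metric.ball (0 : EuclideanSpace ℝ (Fin k)) 1)

/-- If `μ = θ · ℋᵏ` with `θ` supported in a set `R` of finite `ℋᵏ` measure whose
`ℋᵏ`-density is `1` at `ℋᵏ`-a.e. point of `R`, then for `ℋᵏ`-a.e. `x ∈ R` the density
`lim_{r→0⁺} μ(B_r(x))/(Ω(k) rᵏ)` exists and equals `θ x`. -/
theorem density_of_weighted_hausdorff {n : ℕ} (k : ℕ)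
    (μ : Measure (EuclideanSpace ℝ (Fin n))) [IsLocallyFiniteMeasure μ]
    (R : Set (EuclideanSpace ℝ (Fin n))) (hR : MeasurableSet R)
    (hRfin : μH[k] R < ⊤)
    (θ : EuclideanSpace ℝ (Fin n) → ENNReal) (hθ : Measurable θ)
    (hθR : ∀ x ∉ R, θ x = 0)
    (hμ : ∀ B : Set (EuclideanSpace ℝ (Fin n)), MeasurableSet B →
      μ B = ∫⁻ x in B, θ x ∂(μH[k] : Measure (EuclideanSpace ℝ (Fin n))))
    (hdens : ∀ᵐ x ∂((μH[k] : Measure (EuclideanSpace ℝ (Fin n))).restrict R),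
      Tendsto (fun r : ℝ =>
          μH[k] (closedBall x r ∩ R) / (unitBallVol k * ENNReal.ofReal (r ^ k)))
        (𝓝[>] 0) (𝓝 1)) :
    ∀ᵐ x ∂((μH[k] : Measure (EuclideanSpace ℝ (Fin n))).restrict R),
      Tendsto (fun r : ℝ =>
          μ (closedBall x r) / (unitBallVol k * ENNReal.ofReal (r ^ k)))
        (𝓝[>] 0) (𝓝 (θ x)) := by
  set ν : Measure (EuclideanSpace ℝ (Fin n)) :=
    (μH[k] : Measure (EuclideanSpace ℝ (Fin n))).restrict R with hν
  have hνfin : IsFiniteMeasure ν := by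
    constructor
    rw [hν, Measure.restrict_apply_univ]
    exact hRfin
  -- θ equals its indicator on R
  have hθind : θ = R.indicator θ := by
    funext x
    by_cases hx : x ∈ R
    · simp [hx]
    · simp [hx, hθR x hx]
  -- μ = ν.withDensity θ
  have hμν : μ = ν.withDensity θ := by
    ext s hs
    rw [withDensity_apply θ hs]
    calc μ s = ∫⁻ x in s, θ x ∂μH[k] := hμ s hs
      _ = ∫⁻ x in s, R.indicator θ x ∂μH[k] := by rw [← hθind]
      _ = ∫⁻ x in R ∩ s, θ x ∂μH[k] := by
          rw [lintegral_indicator hR, Measure.restrict_restrict hR]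
      _ = ∫⁻ x in s, θ x ∂ν := by
          rw [hν, Measure.restrict_restrict hs, inter_comm]
  have hloc : IsLocallyFiniteMeasure (ν.withDensity θ) := hμν ▸ ‹_›
  -- Besicovitch differentiation: μ(B_r x)/ν(B_r x) → θ x for ν-a.e. x
  have hrn : ∀ᵐ x ∂ν,
      Tendsto (fun r : ℝ => μ (closedBall x r) / ν (closedBall x r)) (𝓝[>] 0)
        (𝓝 (θ x)) := by
    have h1 := Besicovitch.ae_tendsto_rnDeriv (ν.withDensity θ) ν
    have h2 : (ν.withDensity θ).rnDeriv ν =ᵐ[ν] θ := Measure.rnDeriv_withDensity ν hθ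
    filter_upwards [h1, h2] with x hx h2x
    rw [h2x] at hx
    rw [hμν]
    exact hx
  have hΩ0 : unitBallVol k ≠ 0 := (measure_ball_pos volume 0 one_pos).ne'
  have hΩtop : unitBallVol k ≠ ⊤ := measure_ball_lt_top.ne
  filter_upwards [hrn, hdens] with x hx hd
  -- eventually ν (closedBall x r) is positive and finite
  have hev : ∀ᶠ r in 𝓝[>] (0 : ℝ),
      (μ (closedBall x r) / ν (closedBall x r)) *
        (μH[k] (closedBall x r ∩ R) / (unitBallVol k * ENNReal.ofReal (r ^ k))) =
      μ (closedBall x r) / (unitBallVol k * ENNReal.ofReal (r ^ k)) := by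
    have hgt : ∀ᶠ r in 𝓝[>] (0 : ℝ),
        (1 : ENNReal) / 2 <
          μH[k] (closedBall x r ∩ R) / (unitBallVol k * ENNReal.ofReal (r ^ k)) :=
      hd.eventually (eventually_gt_nhds (by norm_num))
    filter_upwards [hgt, self_mem_nhdsWithin] with r hr hrpos
    have hνB : ν (closedBall x r) = μH[k] (closedBall x r ∩ R) :=
      Measure.restrict_apply' hR
    have hne0 : ν (closedBall x r) ≠ 0 := by
      intro h0
      rw [hνB] at h0
      rw [h0, ENNReal.zero_div] at hr
      exact (by norm_num : ¬( (1:ENNReal)/2 < 0)) hr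
    have hnetop : ν (closedBall x r) ≠ ⊤ := by
      refine ne_of_lt (lt_of_le_of_lt ?_ hRfin)
      rw [hνB]
      exact measure_mono inter_subset_right
    rw [← hνB]
    rw [div_eq_mul_inv, div_eq_mul_inv, div_eq_mul_inv, mul_assoc,
      ← mul_assoc (ν (closedBall x r))⁻¹, ENNReal.inv_mul_cancel hne0 hnetop, one_mul]
  refine Tendsto.congr' hev ?_
  have := ENNReal.Tendsto.mul hx (Or.inr ENNReal.one_ne_top) hd (Or.inl one_ne_zero)
  simpa using this
end

section
/- Let X and Y be compact complex manifolds of dimensions n and m respectively, and let f : X → Y be a surjective holomorphic submersion. Then pushforward of triples f_*[(a, e, r)] := [(f_*a, f_*e, f_*r)] gives a well-defined group homomorphism f_* : Ĥᵏ_{BC}(X) → Ĥ^{k+2(m−n)}_{BC}(Y). -/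
private lemma BC.happly {C D : ℕ → Sort*} (F : ∀ i, C i → D i) {i j : ℕ} (h : i = j)
    {x : C i} {y : C j} (hxy : HEq x y) : HEq (F i x) (F j y) := by
  subst h; rw [eq_of_heq hxy]

private lemma BC.zero_heq {C : ℕ → Type*} [∀ i, AddCommGroup (C i)] {i j : ℕ} (h : i = j) :
    HEq (0 : C i) (0 : C j) := by subst h; rfl

private lemma BC.sub_heq {C : ℕ → Type*} [∀ i, AddCommGroup (C i)] {i j : ℕ} (h : i = j)
    {x y : C i} {x' y' : C j} (hx : HEq x x') (hy : HEq y y') : HEq (x - y) (x' - y') := by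
  subst h; rw [eq_of_heq hx, eq_of_heq hy]

private lemma BC.add_heq {C : ℕ → Type*} [∀ i, AddCommGroup (C i)] {i j : ℕ} (h : i = j)
    {x y : C i} {x' y' : C j} (hx : HEq x x') (hy : HEq y y') : HEq (x + y) (x' + y') := by
  subst h; rw [eq_of_heq hx, eq_of_heq hy]

private lemma BC.neg_heq {C : ℕ → Type*} [∀ i, AddCommGroup (C i)] {i j : ℕ} (h : i = j)
    {x : C i} {x' : C j} (hx : HEq x x') : HEq (-x) (-x') := by
  subst h; rw [eq_of_heq hx]

private lemma BC.cast_add {C : ℕ → Type*} [∀ i, AddCommGroup (C i)] {i j : ℕ} (h : i = j)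
    (x y : C i) :
    cast (congrArg C h) (x + y) = cast (congrArg C h) x + cast (congrArg C h) y := by
  subst h; rfl


/-- Pushforward of Bott-Chern sparks along a surjective holomorphic submersion
`f : X → Y` between compact complex manifolds of dimensions `n ≥ m`.  The `X`-side data
(`FormX, CurX, LipX, IntCX` with operators `dCX, dcCX, dFX, dcFX, ιFX, ιLX, ιIX, dIX`)
and `Y`-side data are as in the Bott-Chern spark construction.  The pushforwards
`fC, fL, fI` preserve the dimension of currents/chains, `fF` (fiber integration) lowers
the degree of forms by `2(n−m)`, and they commute with `d`, `dᶜ`, `dI` and with the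
inclusions `ι` (the identifications of degrees being recorded via `HEq`/`cast`).  Then
`(a,e,r) ↦ (f_*a, f_*e, f_*r)` maps degree-`k` sparks on `X` to degree-`k+2(m−n)`
sparks on `Y`, respects the spark equivalence relation and addition: it induces a group
homomorphism `f_* : Ĥᵏ_{BC}(X) → Ĥ^{k+2(m−n)}_{BC}(Y)`. -/
theorem bott_chern_spark_pushforward (n m : ℕ) (hmn : m ≤ n)
    (FormX CurX LipX IntCX FormY CurY LipY IntCY : ℕ → Type*)
    [∀ i, AddCommGroup (FormX i)] [∀ i, AddCommGroup (CurX i)]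
    [∀ i, AddCommGroup (LipX i)] [∀ i, AddCommGroup (IntCX i)]
    [∀ i, AddCommGroup (FormY i)] [∀ i, AddCommGroup (CurY i)]
    [∀ i, AddCommGroup (LipY i)] [∀ i, AddCommGroup (IntCY i)]
    (dCX dcCX : ∀ i, CurX i →+ CurX (i - 1))
    (dFX dcFX : ∀ i, FormX i →+ FormX (i + 1))
    (ιFX : ∀ i, FormX i →+ CurX (2 * n - i))
    (ιLX : ∀ i, LipX i →+ CurX i) (ιIX : ∀ i, IntCX i →+ CurX i)
    (dIX : ∀ i, IntCX i →+ IntCX (i - 1))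
    (dCY dcCY : ∀ i, CurY i →+ CurY (i - 1))
    (dFY dcFY : ∀ i, FormY i →+ FormY (i + 1))
    (ιFY : ∀ i, FormY i →+ CurY (2 * m - i))
    (ιLY : ∀ i, LipY i →+ CurY i) (ιIY : ∀ i, IntCY i →+ CurY i)
    (dIY : ∀ i, IntCY i →+ IntCY (i - 1))
    -- pushforward maps induced by f
    (fC : ∀ i, CurX i →+ CurY i)
    (fL : ∀ i, LipX i →+ LipY i)
    (fI : ∀ i, IntCX i →+ IntCY i)
    (fF : ∀ i, FormX i →+ FormY (i - 2 * (n - m)))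
    -- compatibilities of the pushforward with the operators
    (hfCd : ∀ i (x : CurX i), fC (i - 1) (dCX i x) = dCY i (fC i x))
    (hfCdc : ∀ i (x : CurX i), fC (i - 1) (dcCX i x) = dcCY i (fC i x))
    (hfFι : ∀ i (e : FormX i),
      HEq (ιFY (i - 2 * (n - m)) (fF i e)) (fC (2 * n - i) (ιFX i e)))
    (hfLι : ∀ i (r : LipX i), ιLY i (fL i r) = fC i (ιLX i r))
    (hfIι : ∀ i (s : IntCX i), ιIY i (fI i s) = fC i (ιIX i s))
    (hfId : ∀ i (s : IntCX i), fI (i - 1) (dIX i s) = dIY i (fI i s))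
    (hfFd : ∀ i (e : FormX i), HEq (dFY (i - 2 * (n - m)) (fF i e)) (fF (i + 1) (dFX i e)))
    (hfFdc : ∀ i (e : FormX i),
      HEq (dcFY (i - 2 * (n - m)) (fF i e)) (fF (i + 1) (dcFX i e)))
    (k : ℕ) (hk1 : 2 * (n - m) ≤ k) (hk2 : k ≤ 2 * n) :
    let k' := k - 2 * (n - m)
    let TripleX := CurX (2 * n - k + 2) × FormX k × LipX (2 * n - k)
    let TripleY := CurY (2 * m - k' + 2) × FormY k' × LipY (2 * m - k')
    let IsSparkX : TripleX → Prop := fun t =>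
      dCX _ (dcCX _ t.1) = ιFX k t.2.1 - ιLX _ t.2.2 ∧ dFX k t.2.1 = 0 ∧ dcFX k t.2.1 = 0
    let IsSparkY : TripleY → Prop := fun t =>
      dCY _ (dcCY _ t.1) = ιFY k' t.2.1 - ιLY _ t.2.2 ∧ dFY k' t.2.1 = 0 ∧ dcFY k' t.2.1 = 0
    let RelX : TripleX → TripleX → Prop := fun x y =>
      x.2.1 = y.2.1 ∧ ∃ (b : CurX (2 * n - k + 2)) (s : IntCX (2 * n - k + 2 - 1)),
        dcCX _ x.1 - dcCX _ y.1 = dCX _ b + ιIX _ s ∧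
        ιLX _ (x.2.2 - y.2.2) = - ιIX _ (dIX _ s)
    let RelY : TripleY → TripleY → Prop := fun x y =>
      x.2.1 = y.2.1 ∧ ∃ (b : CurY (2 * m - k' + 2)) (s : IntCY (2 * m - k' + 2 - 1)),
        dcCY _ x.1 - dcCY _ y.1 = dCY _ b + ιIY _ s ∧
        ιLY _ (x.2.2 - y.2.2) = - ιIY _ (dIY _ s)
    let mapTriple : TripleX → TripleY := fun t =>
      (cast (congrArg CurY (by omega : 2 * n - k + 2 = 2 * m - k' + 2)) (fC _ t.1),
       fF k t.2.1,
       cast (congrArg LipY (by omega : 2 * n - k = 2 * m - k')) (fL _ t.2.2))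
    (∀ t : TripleX, IsSparkX t → IsSparkY (mapTriple t))
      ∧ (∀ x y : TripleX, IsSparkX x → IsSparkX y → RelX x y →
          RelY (mapTriple x) (mapTriple y))
      ∧ (∀ x y : TripleX, mapTriple (x + y) = mapTriple x + mapTriple y) := by
  intro k' TripleX TripleY IsSparkX IsSparkY RelX RelY mapTriple
  have hI2 : (2 * n - k + 2 : ℕ) = 2 * m - k' + 2 := by omega
  have hI1 : (2 * n - k + 2 - 1 : ℕ) = 2 * m - k' + 2 - 1 := by omega
  have hI0 : (2 * n - k : ℕ) = 2 * m - k' := by omega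
  refine ⟨?_, ?_, ?_⟩
  · rintro ⟨a, e, r⟩ ⟨h1, h2, h3⟩
    dsimp only at h1 h2 h3
    refine ⟨?_, ?_, ?_⟩
    · have L : HEq
          (dCY (2 * m - k' + 2 - 1) (dcCY (2 * m - k' + 2)
            (cast (congrArg CurY hI2) (fC (2 * n - k + 2) a))))
          (fC (2 * n - k) (ιFX k e) - fC (2 * n - k) (ιLX (2 * n - k) r)) := by
        refine HEq.trans (BC.happly (fun i x => dCY i x) hI1.symm
          ((BC.happly (fun i x => dcCY i x) hI2.symm (cast_heq _ _)).trans
            (heq_of_eq (hfCdc _ a).symm))) (heq_of_eq ?_)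
        beta_reduce
        rw [← hfCd, h1, map_sub]
        rfl
      have R : HEq
          (ιFY k' (fF k e) - ιLY (2 * m - k')
            (cast (congrArg LipY hI0) (fL (2 * n - k) r)))
          (fC (2 * n - k) (ιFX k e) - fC (2 * n - k) (ιLX (2 * n - k) r)) :=
        BC.sub_heq hI0.symm (hfFι k e)
          ((BC.happly (fun i x => ιLY i x) hI0.symm (cast_heq _ _)).trans
            (heq_of_eq (hfLι _ r)))
      exact eq_of_heq (L.trans R.symm)
    · exact eq_of_heq ((hfFd k e).trans (by rw [h2, map_zero]; exact BC.zero_heq (by omega)))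
    · exact eq_of_heq ((hfFdc k e).trans (by rw [h3, map_zero]; exact BC.zero_heq (by omega)))
  · rintro ⟨a1, e1, r1⟩ ⟨a2, e2, r2⟩ - - ⟨he, b, s, hb, hs⟩
    dsimp only at he hb hs
    refine ⟨congrArg (fF k) he,
      cast (congrArg CurY hI2) (fC (2 * n - k + 2) b),
      cast (congrArg IntCY hI1) (fI (2 * n - k + 2 - 1) s), ?_, ?_⟩
    · have L : HEq
          (dcCY (2 * m - k' + 2) (cast (congrArg CurY hI2) (fC (2 * n - k + 2) a1)) -
            dcCY (2 * m - k' + 2) (cast (congrArg CurY hI2) (fC (2 * n - k + 2) a2)))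
          (fC (2 * n - k + 2 - 1) (dCX (2 * n - k + 2) b) +
            fC (2 * n - k + 2 - 1) (ιIX (2 * n - k + 2 - 1) s)) := by
        refine HEq.trans (BC.sub_heq hI1.symm
          ((BC.happly (fun i x => dcCY i x) hI2.symm (cast_heq _ _)).trans
            (heq_of_eq (hfCdc _ a1).symm))
          ((BC.happly (fun i x => dcCY i x) hI2.symm (cast_heq _ _)).trans
            (heq_of_eq (hfCdc _ a2).symm))) (heq_of_eq ?_)
        beta_reduce
        rw [← map_sub, hb, map_add]
      have R : HEq
          (dCY (2 * m - k' + 2) (cast (congrArg CurY hI2) (fC (2 * n - k + 2) b)) +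
            ιIY (2 * m - k' + 2 - 1) (cast (congrArg IntCY hI1) (fI (2 * n - k + 2 - 1) s)))
          (fC (2 * n - k + 2 - 1) (dCX (2 * n - k + 2) b) +
            fC (2 * n - k + 2 - 1) (ιIX (2 * n - k + 2 - 1) s)) :=
        BC.add_heq hI1.symm
          ((BC.happly (fun i x => dCY i x) hI2.symm (cast_heq _ _)).trans
            (heq_of_eq (hfCd _ b).symm))
          ((BC.happly (fun i x => ιIY i x) hI1.symm (cast_heq _ _)).trans
            (heq_of_eq (hfIι _ s)))
      exact eq_of_heq (L.trans R.symm)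
    · have L : HEq
          (ιLY (2 * m - k') (cast (congrArg LipY hI0) (fL (2 * n - k) r1) -
            cast (congrArg LipY hI0) (fL (2 * n - k) r2)))
          (-(fC (2 * n - k) (ιIX (2 * n - k) (dIX (2 * n - k + 2 - 1) s)))) := by
        refine HEq.trans (BC.happly (fun i x => ιLY i x) hI0.symm
          (BC.sub_heq hI0.symm (cast_heq _ _) (cast_heq _ _))) (heq_of_eq ?_)
        beta_reduce
        rw [← map_sub, hfLι, hs, map_neg]
        rfl
      have R : HEq
          (-(ιIY (2 * m - k' + 2 - 1 - 1) (dIY (2 * m - k' + 2 - 1)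
            (cast (congrArg IntCY hI1) (fI (2 * n - k + 2 - 1) s)))))
          (-(fC (2 * n - k) (ιIX (2 * n - k) (dIX (2 * n - k + 2 - 1) s)))) :=
        BC.neg_heq (by omega)
          ((BC.happly (fun i x => ιIY i x) (by omega : 2 * m - k' + 2 - 1 - 1 = 2 * n - k + 2 - 1 - 1)
            ((BC.happly (fun i x => dIY i x) hI1.symm (cast_heq _ _)).trans
              (heq_of_eq (hfId _ s).symm))).trans
            (heq_of_eq (hfIι _ (dIX _ s))))
      exact eq_of_heq (L.trans R.symm)
  · intro x y
    refine Prod.ext ?_ (Prod.ext ?_ ?_)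
    · show cast (congrArg CurY hI2) (fC (2 * n - k + 2) (x.1 + y.1)) = _
      rw [map_add, BC.cast_add hI2]
      rfl
    · exact map_add _ _ _
    · show cast (congrArg LipY hI0) (fL (2 * n - k) (x.2.2 + y.2.2)) = _
      rw [map_add, BC.cast_add hI0]
      rfl
end
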